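/- arXiv:2507.10698 — 5 statements merged into one kernel-verified Lean document; each statement's English description precedes it below -/
import Mathlib

section
/- If a 4×4 positive semidefinite Hermitian matrix M satisfies ⟨i|M|j⟩·⟨bi|bj⟩ = 0 for the specific pairs of product states listed (where the second-factor inner products ⟨0+1|1+2⟩, ⟨2+3|2+3⟩, ⟨2+3|2⟩, ⟨1+2|2+3⟩, ⟨1+2|2⟩, ⟨2|2+3⟩ are all nonzero), then all off-diagonal entries of M vanish, i.e., M is diagonal. -/
/-! The six second-factor inner products are `1/2`, `1`, `1/√2`, `1/2`, `1/√2`, `1/√2`, all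
nonzero, so the hypotheses kill the entries of `M` above the diagonal; Hermiticity of `M` then
kills those below it. -/

open scoped BigOperators ComplexOrder

noncomputable section

/-- Standard basis vector of ℂ⁴. -/
def e4 (i : Fin 4) : Fin 4 → ℂ := fun j => if j = i then 1 else 0

/-- Inner product on ℂ⁴ (conjugate-linear in the first argument). -/
def dot4 (x y : Fin 4 → ℂ) : ℂ := ∑ i, star (x i) * y i

/-- `|i+j⟩ = (|i⟩+|j⟩)/√2`. -/
def p4 (i j : Fin 4) : Fin 4 → ℂ := ((Real.sqrt 2 : ℂ))⁻¹ • (e4 i + e4 j)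

/-- `|i−j⟩ = (|i⟩−|j⟩)/√2`. -/
def m4 (i j : Fin 4) : Fin 4 → ℂ := ((Real.sqrt 2 : ℂ))⁻¹ • (e4 i - e4 j)

theorem Matrix.IsHermitian.apply_eq_zero_of_forall_lt {n α : Type*} [LinearOrder n]
    [NonUnitalSemiring α] [StarRing α] {A : Matrix n n α} (hA : A.IsHermitian)
    (hA0 : ∀ i j, i < j → A i j = 0) {i j : n} (hij : i ≠ j) : A i j = 0 := by
  rcases hij.lt_or_gt with h | h
  · exact hA0 i j h
  · rw [← hA.apply i j, hA0 j i h, star_zero]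

@[simp]
theorem e4_apply (i k : Fin 4) : e4 i k = if k = i then 1 else 0 := rfl

@[simp]
theorem p4_apply (i j k : Fin 4) : p4 i j k = ((Real.sqrt 2 : ℂ))⁻¹ * (e4 i k + e4 j k) := rfl

@[simp]
theorem dot4_e4_left (i : Fin 4) (y : Fin 4 → ℂ) : dot4 (e4 i) y = y i := by
  simp [dot4]

@[simp]
theorem dot4_p4_left (i j : Fin 4) (y : Fin 4 → ℂ) :
    dot4 (p4 i j) y = ((Real.sqrt 2 : ℂ))⁻¹ * (y i + y j) := by
  simp [dot4, mul_add, add_mul, Finset.sum_add_distrib, apply_ite (starRingEnd ℂ), ite_mul]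

/-- if a 4×4 PSD Hermitian `M` satisfies `M i j · ⟨bᵢ|bⱼ⟩ = 0` for the listed
pairs (whose second-factor inner products are nonzero), then `M` is diagonal. -/
theorem stmt0 (M : Matrix (Fin 4) (Fin 4) ℂ) (hM : M.PosSemidef)
    (h01 : M 0 1 * dot4 (p4 0 1) (p4 1 2) = 0)
    (h02 : M 0 2 * dot4 (p4 2 3) (p4 2 3) = 0)
    (h03 : M 0 3 * dot4 (p4 2 3) (e4 2) = 0)
    (h12 : M 1 2 * dot4 (p4 1 2) (p4 2 3) = 0)
    (h13 : M 1 3 * dot4 (p4 1 2) (e4 2) = 0)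
    (h23 : M 2 3 * dot4 (e4 2) (p4 2 3) = 0) :
    ∀ i j : Fin 4, i ≠ j → M i j = 0 := by
  have m01 : M 0 1 = 0 := (mul_eq_zero_iff_right (by simp)).mp h01
  have m02 : M 0 2 = 0 := (mul_eq_zero_iff_right (by simp)).mp h02
  have m03 : M 0 3 = 0 := (mul_eq_zero_iff_right (by simp)).mp h03
  have m12 : M 1 2 = 0 := (mul_eq_zero_iff_right (by simp)).mp h12
  have m13 : M 1 3 = 0 := (mul_eq_zero_iff_right (by simp)).mp h13
  have m23 : M 2 3 = 0 := (mul_eq_zero_iff_right (by simp)).mp h23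
  intro i j hij
  refine hM.isHermitian.apply_eq_zero_of_forall_lt (fun i j hlt => ?_) hij
  fin_cases i <;> fin_cases j <;> first | assumption | exact absurd hlt (by decide)

end
end

section
/- Let P be the orthogonal projection of ℂ⁶ onto span{|0⟩,|1⟩,|2⟩} and Q the orthogonal projection onto span{|3⟩,|4⟩,|5⟩}. Applying P⊗P to the ten states of S₃ sends |φ₆⟩,…,|φ₁₀⟩ to 0 and sends |φ₁⟩,…,|φ₅⟩ (up to nonzero scalars) to the five states |0⟩(|0⟩−|1⟩), |2⟩(|1⟩−|2⟩), (|1⟩−|2⟩)|0⟩, (|0⟩−|1⟩)|2⟩, (|0⟩+|1⟩+|2⟩)(|0⟩+|1⟩+|2⟩), which form (up to normalization) the Bennett 3×3 unextendible product basis 'tiles' set. -/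
/-!
`P ⊗ P` acts on a product state factorwise, and `P` fixes `|0⟩, |1⟩, |2⟩` and kills
`|3⟩, |4⟩, |5⟩`. The first factors of `|φ₆⟩, …, |φ₁₀⟩` lie in `span{|3⟩, |4⟩, |5⟩}`, so
these states vanish, while `|φ₁⟩, …, |φ₅⟩` project exactly (scalar `1`) onto the tiles.
-/

open scoped BigOperators

noncomputable section

def e6 (i : Fin 6) : Fin 6 → ℂ := fun j => if j = i then 1 else 0
def dot6 (x y : Fin 6 → ℂ) : ℂ := ∑ i, star (x i) * y i
/-- Tensor product of two vectors of ℂ⁶, as a vector of ℂ⁶⊗ℂ⁶ ≅ ℂ^{6×6}. -/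
def tp6 (a b : Fin 6 → ℂ) : Fin 6 × Fin 6 → ℂ := fun x => a x.1 * b x.2
/-- Inner product on ℂ⁶⊗ℂ⁶. -/
def dotT6 (x y : Fin 6 × Fin 6 → ℂ) : ℂ := ∑ p, star (x p) * y p

/-- The ten product states of `S₃ ⊂ ℂ⁶⊗ℂ⁶` (unnormalized), `φ 0 = |φ₁⟩, …, φ 9 = |φ₁₀⟩`. -/
def φ : Fin 10 → (Fin 6 × Fin 6 → ℂ) :=
  ![tp6 (e6 0) (e6 0 - e6 1 + e6 4 - e6 5),
    tp6 (e6 2) (e6 1 - e6 2 + e6 5 - e6 3),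
    tp6 (e6 1 - e6 2) (e6 0 - e6 4),
    tp6 (e6 0 - e6 1) (e6 2 - e6 3),
    tp6 (e6 0 + e6 1 + e6 2) (e6 0 + e6 1 + e6 2 + e6 3 + e6 4 + e6 5),
    tp6 (e6 3) (e6 0 - e6 1 + e6 4 - e6 5),
    tp6 (e6 5) (e6 1 - e6 2 + e6 5 - e6 3),
    tp6 (e6 4 - e6 5) (e6 0 - e6 4),
    tp6 (e6 3 - e6 4) (e6 2 - e6 3),
    tp6 (e6 3 + e6 4 + e6 5) (e6 0 + e6 1 + e6 2 + e6 3 + e6 4 + e6 5)]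

/-- `P⊗P` where `P` projects ℂ⁶ onto `span{|0⟩,|1⟩,|2⟩}`. -/
def PP (w : Fin 6 × Fin 6 → ℂ) : Fin 6 × Fin 6 → ℂ :=
  fun x => if (x.1 : ℕ) < 3 ∧ (x.2 : ℕ) < 3 then w x else 0

/-- The five Bennett 3×3 tiles-UPB states, viewed inside ℂ⁶⊗ℂ⁶. -/
def tiles : Fin 5 → (Fin 6 × Fin 6 → ℂ) :=
  ![tp6 (e6 0) (e6 0 - e6 1),
    tp6 (e6 2) (e6 1 - e6 2),
    tp6 (e6 1 - e6 2) (e6 0),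
    tp6 (e6 0 - e6 1) (e6 2),
    tp6 (e6 0 + e6 1 + e6 2) (e6 0 + e6 1 + e6 2)]

def P6 : (Fin 6 → ℂ) →ₗ[ℂ] (Fin 6 → ℂ) :=
  LinearMap.pi fun j => if (j : ℕ) < 3 then LinearMap.proj j else 0

lemma P6_apply (a : Fin 6 → ℂ) (j : Fin 6) : P6 a j = if (j : ℕ) < 3 then a j else 0 := by
  unfold P6
  split_ifs <;> simp [*]

lemma PP_tp6 (a b : Fin 6 → ℂ) : PP (tp6 a b) = tp6 (P6 a) (P6 b) := by
  funext x
  simp only [PP, tp6, P6_apply]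
  split_ifs <;> simp_all

lemma tp6_zero_left (b : Fin 6 → ℂ) : tp6 0 b = 0 :=
  funext fun _ => zero_mul _

lemma P6_e6_of_lt {i : Fin 6} (hi : (i : ℕ) < 3) : P6 (e6 i) = e6 i := by
  funext j
  by_cases hj : j = i <;> simp [P6_apply, e6, hj, hi]

lemma P6_e6_of_le {i : Fin 6} (hi : 3 ≤ (i : ℕ)) : P6 (e6 i) = 0 := by
  funext j
  by_cases hj : j = i
  · subst hj
    simp [P6_apply, e6, hi]
  · simp [P6_apply, e6, hj]

/-- `P⊗P` annihilates `|φ₆⟩,…,|φ₁₀⟩` and sends `|φ₁⟩,…,|φ₅⟩`,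
up to nonzero scalars, to the five Bennett tiles states. -/
theorem stmt5 :
    ∀ i : Fin 5,
      PP (φ (Fin.castLE (by norm_num) i + 5)) = 0 ∧
      ∃ c : ℂ, c ≠ 0 ∧ PP (φ (Fin.castLE (by norm_num) i)) = c • tiles i := by
  intro i
  fin_cases i <;> refine ⟨?_, 1, one_ne_zero, ?_⟩ <;>
    simp [φ, tiles, PP_tp6, P6_e6_of_lt, P6_e6_of_le, tp6_zero_left]

end
end

section
/- Let P be the orthogonal projection of ℂ⁶ onto span{|0⟩,|1⟩,|2⟩} and Q onto span{|3⟩,|4⟩,|5⟩}. Applying P⊗Q to the ten states of S₃ annihilates |φ₆⟩,…,|φ₁₀⟩ and maps |φ₁⟩,…,|φ₅⟩ (up to nonzero scalars) to |0⟩(|4⟩−|5⟩), |2⟩(|5⟩−|3⟩), (|1⟩−|2⟩)|4⟩, (|0⟩−|1⟩)|3⟩, (|0⟩+|1⟩+|2⟩)(|3⟩+|4⟩+|5⟩), which are pairwise orthogonal product states in ℂ³⊗ℂ³ (after relabeling Bob's basis |3⟩,|4⟩,|5⟩ as a qutrit) forming a tiles-type unextendible product basis. -/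
open scoped BigOperators

noncomputable section

/-- `P⊗Q` where `P` projects onto `span{|0⟩,|1⟩,|2⟩}` and `Q` onto `span{|3⟩,|4⟩,|5⟩}`. -/
def PQ (w : Fin 6 × Fin 6 → ℂ) : Fin 6 × Fin 6 → ℂ :=
  fun x => if (x.1 : ℕ) < 3 ∧ 3 ≤ (x.2 : ℕ) then w x else 0

/-- The five image states of `|φ₁⟩,…,|φ₅⟩` under `P⊗Q`. -/
def img : Fin 5 → (Fin 6 × Fin 6 → ℂ) :=
  ![tp6 (e6 0) (e6 4 - e6 5),
    tp6 (e6 2) (e6 5 - e6 3),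
    tp6 (e6 1 - e6 2) (e6 4),
    tp6 (e6 0 - e6 1) (e6 3),
    tp6 (e6 0 + e6 1 + e6 2) (e6 3 + e6 4 + e6 5)]

/-!
`P⊗Q` acts factorwise on product states, restricting Alice's factor to `{0,1,2}` and Bob's to
`{3,4,5}`. Alice's factors of `φ₆,…,φ₁₀` live on `{3,4,5}`, so they are annihilated, while for
`φ₁,…,φ₅` only Bob's factor gets truncated. Inner products of product states factor as well, and in
every pair of image states one of the two factors is already orthogonal: the tiles pattern.
-/

def lowCoords : Set (Fin 6) := {i | (i : ℕ) < 3}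
def highCoords : Set (Fin 6) := {j | 3 ≤ (j : ℕ)}

lemma PQ_tp6 (a b : Fin 6 → ℂ) :
    PQ (tp6 a b) = tp6 (lowCoords.indicator a) (highCoords.indicator b) := by
  funext x
  simp only [PQ, tp6, Set.indicator_apply, lowCoords, highCoords, Set.mem_ofPred_eq]
  split_ifs <;> simp_all

lemma indicator_e6 (s : Set (Fin 6)) (k : Fin 6) [Decidable (k ∈ s)] :
    s.indicator (e6 k) = if k ∈ s then e6 k else 0 := by
  classical
  funext j
  by_cases hj : j = k
  · subst hj
    split_ifs <;> simp_all [e6]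
  · split_ifs <;> simp [Set.indicator_apply, e6, hj]

lemma tp6_neg_right (a b : Fin 6 → ℂ) : tp6 a (-b) = -tp6 a b := by
  funext x
  simp [tp6]

lemma dotT6_tp6 (a b c d : Fin 6 → ℂ) :
    dotT6 (tp6 a b) (tp6 c d) = dot6 a c * dot6 b d := by
  rw [dotT6, dot6, dot6, Finset.sum_mul_sum, Fintype.sum_prod_type]
  refine Finset.sum_congr rfl fun i _ => Finset.sum_congr rfl fun j _ => ?_
  simp only [tp6, star_mul']
  ring

lemma ne_zero_of_dotT6_self_ne_zero {w : Fin 6 × Fin 6 → ℂ} (hw : dotT6 w w ≠ 0) : w ≠ 0 := by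
  rintro rfl
  simp [dotT6] at hw

lemma PQ_φ_castLE_add_five (i : Fin 5) : PQ (φ (Fin.castLE (by norm_num) i + 5)) = 0 := by
  fin_cases i <;>
    simp [φ, PQ_tp6, indicator_e6, Set.indicator_sub', Set.indicator_add', lowCoords,
      tp6_zero_left]

lemma PQ_φ_castLE (i : Fin 5) :
    PQ (φ (Fin.castLE (by norm_num) i)) = (![1, 1, -1, -1, 1] : Fin 5 → ℂ) i • img i := by
  fin_cases i <;>
    simp [φ, img, PQ_tp6, indicator_e6, Set.indicator_sub', Set.indicator_add', lowCoords,
      highCoords, tp6_neg_right]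

lemma PQ_img (i : Fin 5) : PQ (img i) = img i := by
  fin_cases i <;>
    simp [img, PQ_tp6, indicator_e6, Set.indicator_sub', Set.indicator_add', lowCoords, highCoords]

lemma img_ne_zero (i : Fin 5) : img i ≠ 0 := by
  apply ne_zero_of_dotT6_self_ne_zero
  fin_cases i <;> simp [img, dotT6_tp6, dot6, e6, Fin.sum_univ_six]
  norm_num

lemma dotT6_img_of_ne {i j : Fin 5} (hij : i ≠ j) : dotT6 (img i) (img j) = 0 := by
  fin_cases i <;> fin_cases j <;> simp_all [img, dotT6_tp6, dot6, e6, Fin.sum_univ_six]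

/-- `P⊗Q` annihilates `|φ₆⟩,…,|φ₁₀⟩` and maps `|φ₁⟩,…,|φ₅⟩`, up to nonzero
scalars, to the listed states, which are nonzero, pairwise orthogonal, and lie in
`(range P)⊗(range Q)`. -/
theorem stmt6 :
    (∀ i : Fin 5,
      PQ (φ (Fin.castLE (by norm_num) i + 5)) = 0 ∧
      ∃ c : ℂ, c ≠ 0 ∧ PQ (φ (Fin.castLE (by norm_num) i)) = c • img i) ∧
    (∀ i : Fin 5, img i ≠ 0) ∧
    (∀ i j : Fin 5, i ≠ j → dotT6 (img i) (img j) = 0) ∧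
    (∀ (i : Fin 5) (x : Fin 6 × Fin 6),
      ¬((x.1 : ℕ) < 3 ∧ 3 ≤ (x.2 : ℕ)) → img i x = 0) := by
  refine ⟨fun i => ⟨PQ_φ_castLE_add_five i, _, ?_, PQ_φ_castLE i⟩, img_ne_zero,
    fun _ _ => dotT6_img_of_ne, fun i x hx => ?_⟩
  · fin_cases i <;> norm_num
  · rw [← PQ_img i]
    exact if_neg hx

end
end

section
/- For the tiles UPB set U = {|0⟩(|0⟩−|1⟩), (|0⟩−|1⟩)|2⟩, |2⟩(|1⟩−|2⟩), (|1⟩−|2⟩)|0⟩, (|0⟩+|1⟩+|2⟩)(|0⟩+|1⟩+|2⟩)} in ℂ³⊗ℂ³, if a 3×3 positive semidefinite matrix M satisfies ⟨ψ|(M⊗I)|ψ'⟩ = 0 for all distinct ψ, ψ' ∈ U, then M is a scalar multiple of the identity matrix. -/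
open scoped BigOperators ComplexOrder

noncomputable section

def e3 (i : Fin 3) : Fin 3 → ℂ := fun j => if j = i then 1 else 0
def tp3 (a b : Fin 3 → ℂ) : Fin 3 × Fin 3 → ℂ := fun x => a x.1 * b x.2
def dotT3 (x y : Fin 3 × Fin 3 → ℂ) : ℂ := ∑ p, star (x p) * y p

/-- The five (unnormalized) tiles UPB states in ℂ³⊗ℂ³. -/
def U : Fin 5 → (Fin 3 × Fin 3 → ℂ) :=
  ![tp3 (e3 0) (e3 0 - e3 1),
    tp3 (e3 0 - e3 1) (e3 2),
    tp3 (e3 2) (e3 1 - e3 2),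
    tp3 (e3 1 - e3 2) (e3 0),
    tp3 (e3 0 + e3 1 + e3 2) (e3 0 + e3 1 + e3 2)]

/-- Action of `M ⊗ I` on ℂ³⊗ℂ³, `M` acting on the first factor. -/
def MI3 (M : Matrix (Fin 3) (Fin 3) ℂ) (w : Fin 3 × Fin 3 → ℂ) : Fin 3 × Fin 3 → ℂ :=
  fun x => ∑ k, M x.1 k * w (k, x.2)

/-!
For product vectors the overlap factorises, `⟨a ⊗ b|(M ⊗ I)|a' ⊗ b'⟩ = ⟨a|M|a'⟩ ⟨b|b'⟩`, so
whenever Bob's halves of two tiles are not orthogonal, the matrix element of `M` between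
Alice's halves vanishes. Eight such pairs of tiles suffice: the four edge tiles kill the
off-diagonal entries of `M`, and pairing the two tiles whose Alice halves are `e₀ - e₁` and
`e₁ - e₂` with the stopper `(e₀ + e₁ + e₂)^{⊗2}` forces the diagonal entries to agree.
-/

open Matrix

lemma e3_eq_single (i : Fin 3) : e3 i = Pi.single i 1 := by
  ext j
  simp [e3, Pi.single_apply]

lemma dotT3_tp3_MI3_tp3 (M : Matrix (Fin 3) (Fin 3) ℂ) (a b a' b' : Fin 3 → ℂ) :
    dotT3 (tp3 a b) (MI3 M (tp3 a' b')) = (star a ⬝ᵥ M *ᵥ a') * (star b ⬝ᵥ b') := by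
  simp only [dotT3, MI3, tp3, dotProduct, mulVec, Fintype.sum_prod_type, Finset.sum_mul,
    Finset.mul_sum, Pi.star_apply, star_mul']
  rw [Finset.sum_comm]
  refine Finset.sum_congr rfl fun i _ => Finset.sum_congr rfl fun j _ =>
    Finset.sum_congr rfl fun k _ => ?_
  ring

def tileA : Fin 5 → Fin 3 → ℂ := ![e3 0, e3 0 - e3 1, e3 2, e3 1 - e3 2, e3 0 + e3 1 + e3 2]

def tileB : Fin 5 → Fin 3 → ℂ := ![e3 0 - e3 1, e3 2, e3 1 - e3 2, e3 0, e3 0 + e3 1 + e3 2]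

lemma U_eq_tp3 (i : Fin 5) : U i = tp3 (tileA i) (tileB i) := by
  fin_cases i <;> rfl

lemma tileA_sesq_eq_zero {M : Matrix (Fin 3) (Fin 3) ℂ}
    (h : ∀ i j : Fin 5, i ≠ j → dotT3 (U i) (MI3 M (U j)) = 0) {i j : Fin 5} (hij : i ≠ j)
    (hB : star (tileB i) ⬝ᵥ tileB j ≠ 0) : star (tileA i) ⬝ᵥ M *ᵥ tileA j = 0 := by
  have hU := h i j hij
  rw [U_eq_tp3, U_eq_tp3, dotT3_tp3_MI3_tp3] at hU
  exact (mul_eq_zero.mp hU).resolve_right hB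

theorem stmt14_general (M : Matrix (Fin 3) (Fin 3) ℂ)
    (h : ∀ i j : Fin 5, i ≠ j → dotT3 (U i) (MI3 M (U j)) = 0) :
    ∃ c : ℂ, M = c • (1 : Matrix (Fin 3) (Fin 3) ℂ) := by
  have sesq (i j : Fin 5) (hij : i ≠ j) (hB : star (tileB i) ⬝ᵥ tileB j ≠ 0) :=
    tileA_sesq_eq_zero h hij hB
  simp only [tileA, tileB, e3_eq_single] at sesq
  have h02 := sesq 0 2 (by decide) (by simp)
  have h20 := sesq 2 0 (by decide) (by simp)
  have h03 := sesq 0 3 (by decide) (by simp)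
  have h30 := sesq 3 0 (by decide) (by simp)
  have h12 := sesq 1 2 (by decide) (by simp)
  have h21 := sesq 2 1 (by decide) (by simp)
  have h14 := sesq 1 4 (by decide) (by simp)
  have h34 := sesq 3 4 (by decide) (by simp)
  simp only [Fin.isValue, cons_val_zero, cons_val_one, cons_val, Pi.star_single, star_one,
    star_sub, mulVec_single, MulOpposite.op_one, one_smul, col_apply, single_dotProduct, one_mul,
    mulVec_sub, mulVec_add, dotProduct_sub, dotProduct_add, sub_dotProduct]
    at h02 h20 h03 h30 h12 h21 h14 h34
  have m01 : M 0 1 = 0 := by linear_combination h03 + h02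
  have m10 : M 1 0 = 0 := by linear_combination h30 + h20
  have m12 : M 1 2 = 0 := by linear_combination h02 - h12
  have m21 : M 2 1 = 0 := by linear_combination h20 - h21
  have m11 : M 1 1 = M 0 0 := by linear_combination h02 + m01 - m10 - m12 - h14
  have m22 : M 2 2 = M 0 0 := by linear_combination m11 + m10 - h20 - m21 + m12 - h34
  refine ⟨M 0 0, ?_⟩
  ext i j
  fin_cases i <;> fin_cases j <;> simp [h02, h20, m01, m10, m12, m21, m11, m22]

/-- if a PSD matrix `M` satisfies `⟨ψ|(M⊗I)|ψ'⟩ = 0` for all distinct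
states of the tiles UPB, then `M` is a scalar multiple of the identity. -/
theorem stmt14 (M : Matrix (Fin 3) (Fin 3) ℂ) (hM : M.PosSemidef)
    (h : ∀ i j : Fin 5, i ≠ j → dotT3 (U i) (MI3 M (U j)) = 0) :
    ∃ c : ℂ, M = c • (1 : Matrix (Fin 3) (Fin 3) ℂ) :=
  stmt14_general M h

end
end

section
/- Exactly one POVM outcome identifies each state: with M₁ = P[|0⟩−|4⟩] on Bob's ℂ⁶ applied as I⊗M₁ to the set S₃, the only states of S₃ not annihilated are |φ₃⟩ = (|1⟩−|2⟩)⊗(|0⟩−|4⟩) and |φ₈⟩ = (|4⟩−|5⟩)⊗(|0⟩−|4⟩); moreover these two surviving states have orthogonal Alice factors (|1⟩−|2⟩) ⊥ (|4⟩−|5⟩). -/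
open scoped BigOperators

noncomputable section

/-- `P[v]`: orthogonal projection onto the span of the (unnormalized) vector `v`. -/
def proj (v : Fin 6 → ℂ) : Matrix (Fin 6) (Fin 6) ℂ :=
  fun i j => (dot6 v v)⁻¹ * (v i * star (v j))

/-- Bob's POVM element `M₁ = P[|0⟩−|4⟩]`. -/
def M1 : Matrix (Fin 6) (Fin 6) ℂ := proj (e6 0 - e6 4)

/-- Action of `I ⊗ M₁` on ℂ⁶⊗ℂ⁶, `M₁` acting on the second (Bob) factor. -/
def IM (w : Fin 6 × Fin 6 → ℂ) : Fin 6 × Fin 6 → ℂ :=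
  fun x => ∑ k, M1 x.2 k * w (x.1, k)

/-!
With `v = |0⟩ − |4⟩`, the operator `I ⊗ P[v]` maps a product state `a ⊗ b` to
`(⟨v, b⟩ / ⟨v, v⟩) a ⊗ v`. Every Bob factor in `S₃` other than `v` itself satisfies
`b₀ = b₄`, i.e. is orthogonal to `v`, so those states are annihilated, while `φ₃` and `φ₈`,
whose Bob factor is `v`, are fixed.
-/

open Matrix

lemma dot6_e6_sub_e6 (i j : Fin 6) (b : Fin 6 → ℂ) : dot6 (e6 i - e6 j) b = b i - b j := by
  simp [dot6, e6, sub_mul, Finset.sum_sub_distrib]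

lemma proj_mulVec (v b : Fin 6 → ℂ) : proj v *ᵥ b = ((dot6 v v)⁻¹ * dot6 v b) • v := by
  ext i
  simp only [mulVec, dotProduct, proj, dot6, Finset.mul_sum, Pi.smul_apply, smul_eq_mul,
    Finset.sum_mul]
  exact Finset.sum_congr rfl fun j _ => by ring

lemma proj_mulVec_self {v : Fin 6 → ℂ} (hv : dot6 v v ≠ 0) : proj v *ᵥ v = v := by
  rw [proj_mulVec, inv_mul_cancel₀ hv, one_smul]

lemma tp6_ne_zero {a b : Fin 6 → ℂ} {i j : Fin 6} (ha : a i ≠ 0) (hb : b j ≠ 0) :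
    tp6 a b ≠ 0 := fun h => mul_ne_zero ha hb (congrFun h (i, j))

lemma IM_tp6 (a b : Fin 6 → ℂ) : IM (tp6 a b) = tp6 a (M1 *ᵥ b) := by
  ext x
  simp only [IM, tp6, Matrix.mulVec, dotProduct, Finset.mul_sum]
  exact Finset.sum_congr rfl fun k _ => by ring

lemma IM_tp6_eq_zero (a : Fin 6 → ℂ) {b : Fin 6 → ℂ} (hb : b 0 = b 4) : IM (tp6 a b) = 0 := by
  rw [IM_tp6, M1, proj_mulVec, dot6_e6_sub_e6 0 4 b, hb, sub_self, mul_zero, zero_smul]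
  ext x
  simp [tp6]

lemma IM_tp6_e6_sub_e6 (a : Fin 6 → ℂ) : IM (tp6 a (e6 0 - e6 4)) = tp6 a (e6 0 - e6 4) := by
  rw [IM_tp6, M1, proj_mulVec_self]
  simp [dot6_e6_sub_e6, e6]

/-- `I⊗M₁` annihilates every state of `S₃` except
`|φ₃⟩ = (|1⟩−|2⟩)⊗(|0⟩−|4⟩)` and `|φ₈⟩ = (|4⟩−|5⟩)⊗(|0⟩−|4⟩)` (indices `2` and `7`),
and the two survivors have orthogonal Alice factors. -/
theorem stmt16 :
    (∀ i : Fin 10, i ≠ 2 → i ≠ 7 → IM (φ i) = 0) ∧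
    IM (φ 2) ≠ 0 ∧ IM (φ 7) ≠ 0 ∧
    dot6 (e6 1 - e6 2) (e6 4 - e6 5) = 0 := by
  refine ⟨fun i h2 h7 => ?_, ?_, ?_, ?_⟩
  · fin_cases i <;> first
      | exact absurd rfl ‹_›
      | exact IM_tp6_eq_zero _ (by simp [e6])
  · change IM (tp6 (e6 1 - e6 2) (e6 0 - e6 4)) ≠ 0
    rw [IM_tp6_e6_sub_e6]
    exact tp6_ne_zero (i := 1) (j := 0) (by simp [e6]) (by simp [e6])
  · change IM (tp6 (e6 4 - e6 5) (e6 0 - e6 4)) ≠ 0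
    rw [IM_tp6_e6_sub_e6]
    exact tp6_ne_zero (i := 4) (j := 0) (by simp [e6]) (by simp [e6])
  · simp [dot6_e6_sub_e6, e6]

end
end
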